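/- Every finitely generated subgroup of GL(n, ℂ) contains a torsion-free subgroup of finite index. -/

import Mathlib

/-!
The entries of the images of a finite generating set generate a finitely generated ring
`A ⊆ ℂ`, and `ρ` lands in `GL n A`. For a maximal ideal `m` of `A`, the residue field `A ⧸ m`
is finite, of characteristic `p` say, so the congruence kernel of `GL n A → GL n (A ⧸ m)` has
finite index. It contains no element of prime order `q ≠ p`: if `g = 1 + X` with `X ≡ 0 mod m^k`,
then `X ^ 2 ≡ 0 mod m^(k+1)`, so `1 = (1 + X) ^ q ≡ 1 + q X`, and `q` is a unit modulo
`m^(k+1)`; so `X` lies in every `m^k`, hence vanishes by Krull's intersection theorem. Running the same argument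
in `A[1/p]` produces a second residue characteristic `p' ≠ p`, and the intersection of the two
kernels has no elements of prime order at all.
-/

theorem Subgroup.eq_one_of_isOfFinOrder_of_forall_prime {G : Type*} [Group G] {H : Subgroup G}
    (h : ∀ g ∈ H, ∀ q : ℕ, q.Prime → g ^ q = 1 → g = 1) {g : G} (hg : g ∈ H)
    (hfin : IsOfFinOrder g) : g = 1 := by
  by_contra hg1
  have hq : (orderOf g).minFac.Prime := Nat.minFac_prime (mt orderOf_eq_one_iff.mp hg1)
  have hord := orderOf_pow_orderOf_div hfin.orderOf_pos.ne' (Nat.minFac_dvd (orderOf g))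
  have := h _ (H.pow_mem hg _) _ hq (hord ▸ pow_orderOf_eq_one _)
  rw [this, orderOf_one] at hord
  exact hq.one_lt.ne hord

theorem MonoidHom.exists_comp_eq_of_closure_eq_top {Γ G H : Type*} [Group Γ] [Group G]
    [Group H] {S : Set Γ} (hS : Subgroup.closure S = ⊤) (ρ : Γ →* H) {ι : G →* H}
    (hι : Function.Injective ι) (hρ : ∀ s ∈ S, ρ s ∈ ι.range) :
    ∃ ψ : Γ →* G, ι.comp ψ = ρ := by
  have hle : ρ.range ≤ ι.range := by
    rw [ρ.range_eq_map, ← hS, ρ.map_closure, Subgroup.closure_le]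
    rintro _ ⟨s, hs, rfl⟩
    exact hρ s hs
  refine ⟨(MonoidHom.ofInjective hι).symm.toMonoidHom.comp
    (ρ.codRestrict _ fun g => hle ⟨g, rfl⟩), ?_⟩
  ext g
  simp [MonoidHom.apply_ofInjective_symm]

theorem one_add_pow_of_mul_self_eq_zero {R : Type*} [Ring R] {y : R} (hy : y * y = 0) (k : ℕ) :
    (1 + y) ^ k = 1 + k • y := by
  induction k with
  | zero => simp
  | succ k ih => rw [pow_succ, ih, add_mul, one_mul, mul_add, mul_one, smul_mul_assoc, hy,
      smul_zero, add_zero, succ_nsmul', add_assoc]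

instance Int.isJacobsonRing : IsJacobsonRing ℤ := by
  rw [isJacobsonRing_iff_prime_eq]
  intro P hP
  by_cases hbot : P = ⊥
  · subst hbot
    refine le_antisymm (fun x hx => ?_) Ideal.le_jacobson
    have h1 := Ideal.mem_jacobson_bot.mp hx 1
    have h2 := Ideal.mem_jacobson_bot.mp hx (-1)
    rw [Int.isUnit_iff] at h1 h2
    rw [Ideal.mem_bot]
    omega
  · exact Ideal.jacobson_eq_self_of_isMaximal (H := hP.isMaximal hbot)

namespace Ideal

variable {A : Type*} [CommRing A]

theorem finite_quotient_of_isMaximal [Algebra.FiniteType ℤ A] (m : Ideal A) [m.IsMaximal] :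
    Finite (A ⧸ m) := by
  let := Quotient.field m
  have : Module.Finite ℤ (A ⧸ m) := finite_of_finite_type_of_isJacobsonRing ℤ _
  have hchar : ringChar (A ⧸ m) ≠ 0 := by
    intro h
    have : CharP (A ⧸ m) 0 := h ▸ ringChar.charP _
    have : CharZero (A ⧸ m) := CharP.charP_to_charZero _
    exact IsMaximal.ne_bot_of_isIntegral_int (⊥ : Ideal (A ⧸ m)) rfl
  refine Module.finite_of_fg_torsion _ fun x => ⟨⟨ringChar (A ⧸ m), ?_⟩, ?_⟩
  · exact mem_nonZeroDivisors_of_ne_zero (by exact_mod_cast hchar)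
  · simp

theorem exists_prime_natCast_mem [Algebra.FiniteType ℤ A] (m : Ideal A) [m.IsMaximal] :
    ∃ p : ℕ, p.Prime ∧ (p : A) ∈ m := by
  let := Quotient.field m
  have := finite_quotient_of_isMaximal m
  exact ⟨ringChar (A ⧸ m), CharP.prime_ringChar _, Quotient.eq_zero_iff_mem.mp (by simp)⟩

theorem natCast_notMem_of_prime {m : Ideal A} (hm : m ≠ ⊤) {p q : ℕ} (hp : p.Prime)
    (hq : q.Prime) (hqp : q ≠ p) (hpm : (p : A) ∈ m) : (q : A) ∉ m := by
  intro hqm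
  obtain ⟨a, b, hab⟩ := ((Nat.coprime_primes hq hp).mpr hqp).isCoprime.map (Int.castRingHom A)
  simp only [eq_intCast, Int.cast_natCast] at hab
  exact hm ((eq_top_iff_one m).mpr (hab ▸ add_mem (mul_mem_left m a hqm) (mul_mem_left m b hpm)))

end Ideal

namespace Matrix

variable {A : Type*} [CommRing A] {n : Type*} [Fintype n]

theorem mul_apply_mem_mul {I J : Ideal A} {X Y : Matrix n n A} (hX : ∀ i j, X i j ∈ I)
    (hY : ∀ i j, Y i j ∈ J) (i j : n) : (X * Y) i j ∈ I * J :=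
  Ideal.sum_mem _ fun c _ => Ideal.mul_mem_mul (hX i c) (hY c j)

variable [DecidableEq n]

theorem apply_mem_pow_succ_of_one_add_pow_eq_one {m : Ideal A} [m.IsMaximal] {q : ℕ}
    (hq : (q : A) ∉ m) {X : Matrix n n A} (hXq : (1 + X) ^ q = 1) {k : ℕ} (hk : k ≠ 0)
    (hX : ∀ i j, X i j ∈ m ^ k) (i j : n) : X i j ∈ m ^ (k + 1) := by
  let π := (Ideal.Quotient.mk (m ^ (k + 1))).mapMatrix (m := n)
  have hsq : π X * π X = 0 := by
    ext i j
    rw [← map_mul]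
    refine Ideal.Quotient.eq_zero_iff_mem.mpr
      (Ideal.pow_le_pow_right (show k + 1 ≤ k + k by omega) ?_)
    rw [pow_add]
    exact mul_apply_mem_mul hX hX i j
  have hqX : (q : A ⧸ m ^ (k + 1)) • π X = 0 := by
    have := congrArg π hXq
    rwa [map_pow, map_add, map_one, one_add_pow_of_mul_self_eq_zero hsq, add_eq_left,
      ← Nat.cast_smul_eq_nsmul (A ⧸ m ^ (k + 1))] at this
  rw [← map_natCast (Ideal.Quotient.mk _),
    (Ideal.Quotient.isUnit_mk_pow_of_notMem m hq).smul_eq_zero] at hqX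
  exact Ideal.Quotient.eq_zero_iff_mem.mp (congrFun₂ hqX i j)

theorem eq_zero_of_one_add_pow_eq_one [IsNoetherianRing A] [IsDomain A] {m : Ideal A}
    [m.IsMaximal] {q : ℕ} (hq : (q : A) ∉ m) {X : Matrix n n A} (hXq : (1 + X) ^ q = 1)
    (hX : ∀ i j, X i j ∈ m) : X = 0 := by
  have hpow : ∀ k, ∀ i j, X i j ∈ m ^ (k + 1) := by
    intro k
    induction k with
    | zero => simpa using hX
    | succ k ih => exact apply_mem_pow_succ_of_one_add_pow_eq_one hq hXq k.succ_ne_zero ih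
  ext i j
  rw [zero_apply]
  have : X i j ∈ ⨅ k, m ^ k := Submodule.mem_iInf _ |>.mpr fun k =>
    Ideal.pow_le_pow_right k.le_succ (hpow k i j)
  rwa [Ideal.iInf_pow_eq_bot_of_isDomain m (Ideal.IsMaximal.ne_top inferInstance),
    Ideal.mem_bot] at this

namespace GeneralLinearGroup

theorem map_injective {K : Type*} [CommRing K] {f : A →+* K} (hf : Function.Injective f) :
    Function.Injective (map (n := n) f) := fun _ _ h =>
  Units.ext (Matrix.map_injective hf (congrArg Units.val h))

theorem mem_range_map {K : Type*} [CommRing K] {f : A →+* K} (hf : Function.Injective f)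
    {g : GL n K} (hg : ∀ i j, g i j ∈ f.range) (hg' : ∀ i j, g⁻¹ i j ∈ f.range) :
    g ∈ (map (n := n) f).range := by
  choose M hM using hg
  choose M' hM' using hg'
  have hlift : (of M).map f = g := by ext i j; exact hM i j
  have hlift' : (of M').map f = (g⁻¹ : GL n K) := by ext i j; exact hM' i j
  have hinj : Function.Injective (fun X : Matrix n n A => X.map f) := Matrix.map_injective hf
  have hone : (1 : Matrix n n A).map f = 1 := Matrix.map_one _ (map_zero f) (map_one f)
  refine ⟨⟨of M, of M', hinj ?_, hinj ?_⟩, Units.ext hlift⟩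
  · simp only [Matrix.map_mul, hlift, hlift', Units.mul_inv, hone]
  · simp only [Matrix.map_mul, hlift, hlift', Units.inv_mul, hone]

theorem eq_one_of_mem_ker_map_of_pow_eq_one [IsNoetherianRing A] [IsDomain A] {m : Ideal A}
    [m.IsMaximal] {q : ℕ} (hq : (q : A) ∉ m) {g : GL n A}
    (hg : g ∈ (map (n := n) (Ideal.Quotient.mk m)).ker) (hgq : g ^ q = 1) : g = 1 := by
  have hentries : ∀ i j, ((g : Matrix n n A) - 1) i j ∈ m := by
    intro i j
    have := congrArg (fun M : GL n (A ⧸ m) => (M : Matrix n n (A ⧸ m)) i j) hg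
    simp only [GeneralLinearGroup.map_apply] at this
    rw [sub_apply, ← Ideal.Quotient.eq]
    simpa [one_apply, apply_ite] using this
  have : (g : Matrix n n A) - 1 = 0 := eq_zero_of_one_add_pow_eq_one hq
    (by rw [add_sub_cancel, ← Units.val_pow_eq_pow_val, hgq, Units.val_one]) hentries
  exact Units.ext (sub_eq_zero.mp this)

end GeneralLinearGroup

end Matrix

theorem exists_finiteIndex_forall_pow_eq_one {Γ A : Type*} [Group Γ] [CommRing A] [IsDomain A]
    [Algebra.FiniteType ℤ A] {n : Type*} [Fintype n] [DecidableEq n] (m : Ideal A)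
    [m.IsMaximal] (ψ : Γ →* GL n A) (hψ : Function.Injective ψ) :
    ∃ H : Subgroup Γ, H.FiniteIndex ∧ ∀ g ∈ H, ∀ q : ℕ, (q : A) ∉ m → g ^ q = 1 → g = 1 := by
  have := Ideal.finite_quotient_of_isMaximal m
  have := Algebra.FiniteType.isNoetherianRing ℤ A
  refine ⟨((Matrix.GeneralLinearGroup.map (Ideal.Quotient.mk m)).comp ψ).ker, inferInstance, ?_⟩
  intro g hg q hq hgq
  refine hψ ((Matrix.GeneralLinearGroup.eq_one_of_mem_ker_map_of_pow_eq_one hq hg ?_).trans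
    ψ.map_one.symm)
  rw [← map_pow, hgq, map_one]

theorem Group.FG.exists_finset_forall_subalgebra_lift {Γ R K : Type*} [Group Γ] [CommRing R]
    [CommRing K] [Algebra R K] {n : Type*} [Fintype n] [DecidableEq n] (hfg : Group.FG Γ)
    (ρ : Γ →* GL n K) : ∃ T : Finset K, ∀ A : Subalgebra R K, (T : Set K) ⊆ A →
      ∃ ψ : Γ →* GL n A, (Matrix.GeneralLinearGroup.map (A.val : A →+* K)).comp ψ = ρ := by
  classical
  obtain ⟨S, hS⟩ := hfg
  refine ⟨S.biUnion fun s => Finset.univ.image (fun ij : n × n => ρ s ij.1 ij.2) ∪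
    Finset.univ.image (fun ij : n × n => (ρ s)⁻¹ ij.1 ij.2), fun A hA => ?_⟩
  refine MonoidHom.exists_comp_eq_of_closure_eq_top hS ρ
    (Matrix.GeneralLinearGroup.map_injective Subtype.val_injective) fun s hs => ?_
  refine Matrix.GeneralLinearGroup.mem_range_map Subtype.val_injective
    (fun i j => ⟨⟨_, hA ?_⟩, rfl⟩) (fun i j => ⟨⟨_, hA ?_⟩, rfl⟩) <;>
  simp only [Finset.coe_biUnion, Finset.coe_union, Finset.coe_image, Set.mem_iUnion,
    Set.mem_union]
  · exact ⟨s, hs, Or.inl ⟨(i, j), by simp⟩⟩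
  · exact ⟨s, hs, Or.inr ⟨(i, j), by simp⟩⟩

/-- **Selberg's lemma.** Every finitely generated subgroup of `GL(n, ℂ)`
(presented as a finitely generated group with a faithful representation into
`GL(n, ℂ)`) contains a torsion-free subgroup of finite index. -/
theorem selberg_torsion_free_finite_index
    (Γ : Type) [Group Γ] (hfg : Group.FG Γ) (n : ℕ)
    (ρ : Γ →* Matrix.GeneralLinearGroup (Fin n) ℂ)
    (hinj : Function.Injective ρ) :
    ∃ H : Subgroup Γ, H.FiniteIndex ∧ ∀ g ∈ H, IsOfFinOrder g → g = 1 := by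
  obtain ⟨T, hlift⟩ := hfg.exists_finset_forall_subalgebra_lift (R := ℤ) ρ
  have hft (T' : Finset ℂ) : Algebra.FiniteType ℤ (Algebra.adjoin ℤ (T' : Set ℂ)) :=
    .adjoin_of_finite T'.finite_toSet
  have hcong (T' : Finset ℂ) (hT' : T ⊆ T') (m : Ideal (Algebra.adjoin ℤ (T' : Set ℂ)))
      [m.IsMaximal] : ∃ H : Subgroup Γ, H.FiniteIndex ∧
        ∀ g ∈ H, ∀ q : ℕ, (q : Algebra.adjoin ℤ (T' : Set ℂ)) ∉ m → g ^ q = 1 → g = 1 := by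
    obtain ⟨ψ, hψ⟩ := hlift _ ((Finset.coe_subset.mpr hT').trans Algebra.subset_adjoin)
    rw [← hψ, MonoidHom.coe_comp] at hinj
    exact exists_finiteIndex_forall_pow_eq_one m ψ hinj.of_comp
  obtain ⟨m₀, hm₀⟩ := Ideal.exists_maximal (Algebra.adjoin ℤ (T : Set ℂ))
  obtain ⟨p, hp, hpm₀⟩ := Ideal.exists_prime_natCast_mem m₀
  obtain ⟨m₁, hm₁⟩ := Ideal.exists_maximal (Algebra.adjoin ℤ (↑(insert (p : ℂ)⁻¹ T) : Set ℂ))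
  obtain ⟨H₀, _, htor₀⟩ := hcong T subset_rfl m₀
  obtain ⟨H₁, _, htor₁⟩ := hcong _ (Finset.subset_insert _ _) m₁
  refine ⟨H₀ ⊓ H₁, inferInstance, fun _ => Subgroup.eq_one_of_isOfFinOrder_of_forall_prime ?_⟩
  intro g hg q hq hgq
  obtain rfl | hqp := eq_or_ne q p
  · have hunit : IsUnit (q : Algebra.adjoin ℤ (↑(insert (q : ℂ)⁻¹ T) : Set ℂ)) :=
      IsUnit.of_mul_eq_one ⟨(q : ℂ)⁻¹, Algebra.subset_adjoin (by simp)⟩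
        (Subtype.ext (by simp [hq.ne_zero]))
    exact htor₁ g hg.2 q (fun hqm => hm₁.ne_top (m₁.eq_top_of_isUnit_mem hqm hunit)) hgq
  · exact htor₀ g hg.1 q (Ideal.natCast_notMem_of_prime hm₀.ne_top hp hq hqp hpm₀) hgq
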